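/- The quantum exterior algebra Λ_q(u_+) on the adjoint module of U_q(sl(2)) (for generic q) has the same graded dimensions as the classical exterior algebra on a 3-dimensional space: dimensions 1, 3, 3, 1 in degrees 0, 1, 2, 3, with degree-2 basis {v_1∧v_0, v_1∧v_{-1}, v_0∧v_{-1}} and degree-3 basis {v_1∧v_0∧v_{-1}}, and all components of degree ≥ 4 vanish. -/

import Mathlib

open TensorAlgebra

/-- The 3-dimensional space u₊ = span{v₁, v₀, v₋₁}. -/
abbrev Vsp : Type := Fin 3 → ℝ

def v1 : Vsp := Pi.single 0 1
def v0 : Vsp := Pi.single 1 1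
def vm1 : Vsp := Pi.single 2 1

/-- The quantum symmetric 2-tensors generating the defining ideal of Λ_q(u₊). -/
inductive qRel (q : ℝ) : TensorAlgebra ℝ Vsp → TensorAlgebra ℝ Vsp → Prop
  | r1 : qRel q (ι ℝ v1 * ι ℝ v1) 0
  | r2 : qRel q (ι ℝ v1 * ι ℝ v0 + q⁻¹ ^ 2 • (ι ℝ v0 * ι ℝ v1)) 0
  | r3 : qRel q (ι ℝ v0 * ι ℝ vm1 + q⁻¹ ^ 2 • (ι ℝ vm1 * ι ℝ v0)) 0
  | r4 : qRel q (ι ℝ vm1 * ι ℝ vm1) 0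
  | r5 : qRel q (ι ℝ v1 * ι ℝ vm1 + q ^ 2 • (ι ℝ vm1 * ι ℝ v1)
      - q ^ 2 • (ι ℝ v0 * ι ℝ v0)) 0
  | r6 : qRel q (ι ℝ v1 * ι ℝ vm1 + q⁻¹ ^ 4 • (ι ℝ vm1 * ι ℝ v1)
      + (q⁻¹ * (q + q⁻¹)) • (ι ℝ v0 * ι ℝ v0)) 0

/-- The quantum exterior algebra Λ_q(u₊). -/
abbrev LamQ (q : ℝ) := RingQuot (qRel q)

noncomputable def mkQ (q : ℝ) : TensorAlgebra ℝ Vsp →ₐ[ℝ] LamQ q :=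
  RingQuot.mkAlgHom ℝ (qRel q)

noncomputable def X1 (q : ℝ) : LamQ q := mkQ q (ι ℝ v1)
noncomputable def X0 (q : ℝ) : LamQ q := mkQ q (ι ℝ v0)
noncomputable def Xm1 (q : ℝ) : LamQ q := mkQ q (ι ℝ vm1)

/-- The 8 monomials 1; v₁, v₀, v₋₁; v₁∧v₀, v₁∧v₋₁, v₀∧v₋₁; v₁∧v₀∧v₋₁. -/
noncomputable def monos (q : ℝ) : Fin 8 → LamQ q :=
  ![1, X1 q, X0 q, Xm1 q, X1 q * X0 q, X1 q * Xm1 q, X0 q * Xm1 q,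
    X1 q * X0 q * Xm1 q]

/-!
The defining relations let every word in `v₁, v₀, v₋₁` be rewritten as a scalar multiple of
one of the eight ordered monomials `v₁^a v₀^b v₋₁^c` (`a, b, c ∈ {0, 1}`), or as `0`; in
particular every product of four generators vanishes. Conversely, the eight monomials are
linearly independent because the algebra acts on `ℝ⁸` by explicit matrices satisfying the
relations, and `x ↦ ρ(x) e₀` sends the monomials to the standard basis.
-/

theorem Submodule.eq_top_of_one_mem_of_mul_mem {R A : Type*} [CommSemiring R] [Semiring A]
    [Algebra R A] {s : Set A} (hs : Algebra.adjoin R s = ⊤) {S : Submodule R A} (h1 : 1 ∈ S)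
    (hmul : ∀ a ∈ s, ∀ y ∈ S, a * y ∈ S) : S = ⊤ := by
  let T : Subalgebra R A :=
    { carrier := {x | ∀ y ∈ S, x * y ∈ S}
      mul_mem' := fun hx hx' y hy => by rw [mul_assoc]; exact hx _ (hx' y hy)
      add_mem' := fun hx hx' y hy => by rw [add_mul]; exact add_mem (hx y hy) (hx' y hy)
      algebraMap_mem' := fun r y hy => by
        rw [Algebra.algebraMap_eq_smul_one, smul_mul_assoc, one_mul]
        exact S.smul_mem r hy }
  have hT : Algebra.adjoin R s ≤ T := Algebra.adjoin_le hmul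
  refine eq_top_iff.2 fun x _ => ?_
  simpa using hT (hs ▸ Algebra.mem_top : x ∈ Algebra.adjoin R s) 1 h1

namespace LamQ

variable {q : ℝ}

theorem mkQ_eq_zero_of_qRel {a : TensorAlgebra ℝ Vsp} (h : qRel q a 0) : mkQ q a = 0 :=
  (RingQuot.mkAlgHom_rel ℝ h).trans (map_zero _)

theorem X1_mul_X1 : X1 q * X1 q = 0 := by
  simpa only [map_mul, X1] using mkQ_eq_zero_of_qRel (qRel.r1 (q := q))

theorem Xm1_mul_Xm1 : Xm1 q * Xm1 q = 0 := by
  simpa only [map_mul, Xm1] using mkQ_eq_zero_of_qRel (qRel.r4 (q := q))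

theorem X0_mul_X1 (hq : q ≠ 0) : X0 q * X1 q = -q ^ 2 • (X1 q * X0 q) := by
  have h : X1 q * X0 q + q⁻¹ ^ 2 • (X0 q * X1 q) = 0 := by
    simpa only [map_add, map_smul, map_mul, X1, X0] using mkQ_eq_zero_of_qRel (qRel.r2 (q := q))
  linear_combination (norm := skip) q ^ 2 • h
  match_scalars <;> field_simp <;> ring

theorem Xm1_mul_X0 (hq : q ≠ 0) : Xm1 q * X0 q = -q ^ 2 • (X0 q * Xm1 q) := by
  have h : X0 q * Xm1 q + q⁻¹ ^ 2 • (Xm1 q * X0 q) = 0 := by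
    simpa only [map_add, map_smul, map_mul, X0, Xm1] using mkQ_eq_zero_of_qRel (qRel.r3 (q := q))
  linear_combination (norm := skip) q ^ 2 • h
  match_scalars <;> field_simp <;> ring

/- `(q² + 1) • r5 + q⁴ • r6` is `(q⁴ + q² + 1) • (v₁ v₋₁ + v₋₁ v₁)`, and `q⁴ + q² + 1 > 0`.
The sign is the scalar `(-1 : ℝ)` because negation on `LamQ q` is not reducibly compatible with
its multiplication (`neg_mul` does not rewrite it). -/
theorem Xm1_mul_X1 (hq : q ≠ 0) : Xm1 q * X1 q = (-1 : ℝ) • (X1 q * Xm1 q) := by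
  have h5 : X1 q * Xm1 q + q ^ 2 • (Xm1 q * X1 q) - q ^ 2 • (X0 q * X0 q) = 0 := by
    simpa only [map_add, map_sub, map_smul, map_mul, X1, X0, Xm1] using
      mkQ_eq_zero_of_qRel (qRel.r5 (q := q))
  have h6 : X1 q * Xm1 q + q⁻¹ ^ 4 • (Xm1 q * X1 q) + (q⁻¹ * (q + q⁻¹)) • (X0 q * X0 q) = 0 := by
    simpa only [map_add, map_smul, map_mul, X1, X0, Xm1] using
      mkQ_eq_zero_of_qRel (qRel.r6 (q := q))
  have : q ^ 4 + q ^ 2 + 1 ≠ 0 := by positivity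
  linear_combination (norm := skip) (q ^ 4 + q ^ 2 + 1)⁻¹ • ((q ^ 2 + 1) • h5 + q ^ 4 • h6)
  match_scalars <;> field_simp <;> ring

theorem X0_mul_X0 (hq : q ≠ 0) : X0 q * X0 q = (q⁻¹ ^ 2 - 1) • (X1 q * Xm1 q) := by
  have h5 : X1 q * Xm1 q + q ^ 2 • (Xm1 q * X1 q) - q ^ 2 • (X0 q * X0 q) = 0 := by
    simpa only [map_add, map_sub, map_smul, map_mul, X1, X0, Xm1] using
      mkQ_eq_zero_of_qRel (qRel.r5 (q := q))
  rw [Xm1_mul_X1 hq] at h5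
  linear_combination (norm := skip) (-q⁻¹ ^ 2) • h5
  match_scalars <;> field_simp <;> ring

theorem X1_mul_X1_mul (y : LamQ q) : X1 q * (X1 q * y) = 0 := by
  rw [← mul_assoc, X1_mul_X1, zero_mul]

theorem X0_mul_X1_mul (hq : q ≠ 0) (y : LamQ q) :
    X0 q * (X1 q * y) = -q ^ 2 • (X1 q * (X0 q * y)) := by
  rw [← mul_assoc, X0_mul_X1 hq, smul_mul_assoc, mul_assoc]

theorem Xm1_mul_X0_mul (hq : q ≠ 0) (y : LamQ q) :
    Xm1 q * (X0 q * y) = -q ^ 2 • (X0 q * (Xm1 q * y)) := by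
  rw [← mul_assoc, Xm1_mul_X0 hq, smul_mul_assoc, mul_assoc]

theorem Xm1_mul_X1_mul (hq : q ≠ 0) (y : LamQ q) :
    Xm1 q * (X1 q * y) = (-1 : ℝ) • (X1 q * (Xm1 q * y)) := by
  rw [← mul_assoc, Xm1_mul_X1 hq, smul_mul_assoc, mul_assoc]

theorem X0_mul_X0_mul (hq : q ≠ 0) (y : LamQ q) :
    X0 q * (X0 q * y) = (q⁻¹ ^ 2 - 1) • (X1 q * (Xm1 q * y)) := by
  rw [← mul_assoc, X0_mul_X0 hq, smul_mul_assoc, mul_assoc]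

theorem adjoin_generators_eq_top :
    Algebra.adjoin ℝ {X1 q, X0 q, Xm1 q} = ⊤ := by
  rw [eq_top_iff]
  rintro x -
  obtain ⟨y, rfl⟩ := RingQuot.mkAlgHom_surjective ℝ (qRel q) x
  induction y using TensorAlgebra.induction with
  | algebraMap r =>
    exact (RingQuot.mkAlgHom ℝ (qRel q)).commutes r ▸ Subalgebra.algebraMap_mem _ r
  | ι v =>
    have hv : v = v 0 • v1 + v 1 • v0 + v 2 • vm1 := by
      ext i; fin_cases i <;> simp [v1, v0, vm1]
    rw [hv]
    simp only [map_add, map_smul]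
    refine add_mem (add_mem ?_ ?_) ?_ <;> refine Subalgebra.smul_mem _ ?_ _ <;>
      apply Algebra.subset_adjoin
    exacts [.inl rfl, .inr (.inl rfl), .inr (.inr rfl)]
  | mul a b ha hb => exact map_mul (RingQuot.mkAlgHom ℝ (qRel q)) a b ▸ mul_mem ha hb
  | add a b ha hb => exact map_add (RingQuot.mkAlgHom ℝ (qRel q)) a b ▸ add_mem ha hb

theorem generator_mul_monos_mem_span (hq : q ≠ 0) :
    ∀ g ∈ ({X1 q, X0 q, Xm1 q} : Set (LamQ q)), ∀ i,
      g * monos q i ∈ Submodule.span ℝ (Set.range (monos q)) := by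
  set S := Submodule.span ℝ (Set.range (monos q))
  have hmem (i : Fin 8) : monos q i ∈ S := Submodule.subset_span ⟨i, rfl⟩
  have h1 : X1 q ∈ S := hmem 1
  have h2 : X0 q ∈ S := hmem 2
  have h3 : Xm1 q ∈ S := hmem 3
  have h4 : X1 q * X0 q ∈ S := hmem 4
  have h5 : X1 q * Xm1 q ∈ S := hmem 5
  have h6 : X0 q * Xm1 q ∈ S := hmem 6
  have h7 : X1 q * (X0 q * Xm1 q) ∈ S := mul_assoc (X1 q) _ _ ▸ hmem 7
  simp only [Set.mem_insert_iff, Set.mem_singleton_iff]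
  rintro g (rfl | rfl | rfl) i <;> fin_cases i <;>
    simp only [monos, Fin.zero_eta, Fin.mk_one, Fin.reduceFinMk, Matrix.cons_val, mul_one,
      mul_assoc, X1_mul_X1, Xm1_mul_Xm1, X0_mul_X1 hq, Xm1_mul_X0 hq, Xm1_mul_X1 hq, X0_mul_X0 hq,
      X1_mul_X1_mul, X0_mul_X1_mul hq, Xm1_mul_X0_mul hq, Xm1_mul_X1_mul hq, X0_mul_X0_mul hq,
      mul_smul_comm, smul_smul, mul_zero, smul_zero]
  all_goals first
    | exact zero_mem _
    | repeat apply Submodule.smul_mem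
      with_reducible assumption

theorem span_monos_eq_top (hq : q ≠ 0) : Submodule.span ℝ (Set.range (monos q)) = ⊤ := by
  refine Submodule.eq_top_of_one_mem_of_mul_mem adjoin_generators_eq_top
    (Submodule.subset_span ⟨0, rfl⟩) fun g hg y hy => ?_
  refine Submodule.span_induction (fun x ⟨i, hi⟩ => hi ▸ generator_mul_monos_mem_span hq g hg i)
    (by rw [mul_zero]; exact zero_mem _) (fun x y _ _ hx hy => ?_) (fun r x _ hx => ?_) hy
  · rw [mul_add]; exact add_mem hx hy
  · rw [mul_smul_comm]; exact Submodule.smul_mem _ r hx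

theorem generator_mul_mul_mul_eq_zero (hq : q ≠ 0) :
    ∀ a ∈ ({X1 q, X0 q, Xm1 q} : Set (LamQ q)), ∀ b ∈ ({X1 q, X0 q, Xm1 q} : Set (LamQ q)),
      ∀ c ∈ ({X1 q, X0 q, Xm1 q} : Set (LamQ q)), ∀ d ∈ ({X1 q, X0 q, Xm1 q} : Set (LamQ q)),
        a * b * c * d = 0 := by
  simp only [Set.mem_insert_iff, Set.mem_singleton_iff]
  rintro a (rfl | rfl | rfl) b (rfl | rfl | rfl) c (rfl | rfl | rfl) d (rfl | rfl | rfl) <;>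
    simp only [mul_assoc, X1_mul_X1, Xm1_mul_Xm1, X0_mul_X1 hq, Xm1_mul_X0 hq, Xm1_mul_X1 hq,
      X0_mul_X0 hq, X1_mul_X1_mul, X0_mul_X1_mul hq, X0_mul_X0_mul hq, smul_mul_assoc,
      mul_smul_comm, smul_smul, zero_mul, mul_zero, smul_zero]

open Matrix

/- Column `j` of each matrix holds the coordinates of `g * monos q j` in the family `monos q`
(read off from the normal-ordering rules above), so these are the matrices of the left regular
representation. -/

noncomputable def matX1 : Matrix (Fin 8) (Fin 8) ℝ :=
  single 1 0 1 + single 4 2 1 + single 5 3 1 + single 7 6 1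

noncomputable def matX0 (q : ℝ) : Matrix (Fin 8) (Fin 8) ℝ :=
  single 2 0 1 + (-q ^ 2) • single 4 1 1 + (q⁻¹ ^ 2 - 1) • single 5 2 1 + single 6 3 1 +
    (-q ^ 2) • single 7 5 1

noncomputable def matXm1 (q : ℝ) : Matrix (Fin 8) (Fin 8) ℝ :=
  single 3 0 1 + (-1 : ℝ) • single 5 1 1 + (-q ^ 2) • single 6 2 1 + q ^ 2 • single 7 4 1

noncomputable def matOfVsp (q : ℝ) : Vsp →ₗ[ℝ] Matrix (Fin 8) (Fin 8) ℝ :=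
  Fintype.linearCombination ℝ ![matX1, matX0 q, matXm1 q]

theorem matOfVsp_v1 : matOfVsp q v1 = matX1 := by
  simp [matOfVsp, v1, Fintype.linearCombination_apply_single]

theorem matOfVsp_v0 : matOfVsp q v0 = matX0 q := by
  simp [matOfVsp, v0, Fintype.linearCombination_apply_single]

theorem matOfVsp_vm1 : matOfVsp q vm1 = matXm1 q := by
  simp [matOfVsp, vm1, Fintype.linearCombination_apply_single]

theorem lift_matOfVsp_eq_of_qRel (hq : q ≠ 0) ⦃a b : TensorAlgebra ℝ Vsp⦄ (h : qRel q a b) :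
    TensorAlgebra.lift ℝ (matOfVsp q) a = TensorAlgebra.lift ℝ (matOfVsp q) b := by
  cases h <;>
    simp only [map_add, map_sub, map_mul, map_smul, map_zero, TensorAlgebra.lift_ι_apply,
      matOfVsp_v1, matOfVsp_v0, matOfVsp_vm1, matX1, matX0, matXm1, add_mul, mul_add,
      smul_mul_assoc, mul_smul_comm, single_mul_single_same, mul_one, ne_eq, Fin.reduceEq,
      not_false_eq_true, single_mul_single_of_ne, smul_zero, add_zero, zero_add]
  all_goals match_scalars <;> field_simp <;> ring

noncomputable def regularRep (hq : q ≠ 0) : LamQ q →ₐ[ℝ] Matrix (Fin 8) (Fin 8) ℝ :=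
  RingQuot.liftAlgHom ℝ ⟨TensorAlgebra.lift ℝ (matOfVsp q), lift_matOfVsp_eq_of_qRel hq⟩

theorem regularRep_mkQ_ι (hq : q ≠ 0) (v : Vsp) :
    regularRep hq (mkQ q (TensorAlgebra.ι ℝ v)) = matOfVsp q v := by
  rw [regularRep, mkQ, RingQuot.liftAlgHom_mkAlgHom_apply, TensorAlgebra.lift_ι_apply]

theorem regularRep_monos_mulVec_single_zero (hq : q ≠ 0) (i : Fin 8) :
    regularRep hq (monos q i) *ᵥ Pi.single 0 1 = Pi.single i 1 := by
  fin_cases i <;>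
    simp only [monos, X1, X0, Xm1, Fin.zero_eta, Fin.mk_one, Fin.reduceFinMk, Matrix.cons_val,
      map_one, map_mul, regularRep_mkQ_ι, matOfVsp_v1, matOfVsp_v0, matOfVsp_vm1, ← mulVec_mulVec,
      one_mulVec, matX1, matX0, matXm1, add_mulVec, smul_mulVec, single_mulVec_eq] <;>
    simp

theorem linearIndependent_monos (hq : q ≠ 0) : LinearIndependent ℝ (monos q) := by
  let ev : LamQ q →ₗ[ℝ] (Fin 8 → ℝ) :=
    LinearMap.applyₗ (Pi.single 0 1) ∘ₗ Matrix.toLin'.toLinearMap ∘ₗ (regularRep hq).toLinearMap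
  refine LinearIndependent.of_comp ev ?_
  have hev : ev ∘ monos q = Pi.basisFun ℝ (Fin 8) := by
    ext i : 1
    simpa [ev] using regularRep_monos_mulVec_single_zero hq i
  exact hev ▸ (Pi.basisFun ℝ (Fin 8)).linearIndependent

end LamQ

theorem stmt_13_general (q : ℝ) (hq : q ≠ 0) :
    LinearIndependent ℝ (monos q) ∧
    Submodule.span ℝ (Set.range (monos q)) = ⊤ ∧
    (∀ a ∈ ({X1 q, X0 q, Xm1 q} : Set (LamQ q)),
     ∀ b ∈ ({X1 q, X0 q, Xm1 q} : Set (LamQ q)),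
     ∀ c ∈ ({X1 q, X0 q, Xm1 q} : Set (LamQ q)),
     ∀ d ∈ ({X1 q, X0 q, Xm1 q} : Set (LamQ q)), a * b * c * d = 0) :=
  ⟨LamQ.linearIndependent_monos hq, LamQ.span_monos_eq_top hq,
    LamQ.generator_mul_mul_mul_eq_zero hq⟩

/-- For generic q, Λ_q(u₊) has the classical graded dimensions 1, 3, 3, 1:
the 8 listed monomials form a basis (so the degree-2 component has basis
{v₁∧v₀, v₁∧v₋₁, v₀∧v₋₁} and degree 3 has basis {v₁∧v₀∧v₋₁}), and every
product of four generators vanishes. -/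
theorem stmt_13 (q : ℝ) (hq : q ≠ 0) (hroot : ∀ n : ℕ, n ≠ 0 → q ^ n ≠ 1) :
    LinearIndependent ℝ (monos q) ∧
    Submodule.span ℝ (Set.range (monos q)) = ⊤ ∧
    (∀ a ∈ ({X1 q, X0 q, Xm1 q} : Set (LamQ q)),
     ∀ b ∈ ({X1 q, X0 q, Xm1 q} : Set (LamQ q)),
     ∀ c ∈ ({X1 q, X0 q, Xm1 q} : Set (LamQ q)),
     ∀ d ∈ ({X1 q, X0 q, Xm1 q} : Set (LamQ q)), a * b * c * d = 0) :=
  stmt_13_general q hq
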